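/- arXiv:1306.1366 — 3 statements merged into one kernel-verified Lean document; each statement's English description precedes it below -/
import Mathlib

section
/- Every nonempty word W over a totally ordered alphabet has a unique factorization W = L_1 L_2 ... L_k into Lyndon words such that L_1 ≥_lex L_2 ≥_lex ... ≥_lex L_k. -/
/-!
Existence: prepend the letters one at a time. A Lyndon word `u` in front of a factorization
`L :: F` either already fits (`L ≤ u`) or merges with `L`, because `u < L` with both Lyndon makes
`u ++ L` Lyndon.

Uniqueness: the first factor `L` is the longest Lyndon prefix of the word. A longer Lyndon prefix
`P` would end in a nonempty prefix `y` of some later factor `M`, and then `y ≤ M ≤ L ≤ P < y`.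
-/

/-- A Lyndon word: nonempty and strictly lexicographically smaller than
every proper cyclic rotation. -/
def IsLyndon {α : Type*} [LinearOrder α] (l : List α) : Prop :=
  l ≠ [] ∧ ∀ u v : List α, u ≠ [] → v ≠ [] → l = u ++ v → l < v ++ u

namespace List

variable {α : Type*} [LinearOrder α] {u v : List α}

theorem lt_append_of_ne_nil (u : List α) {t : List α} (ht : t ≠ []) : u < u ++ t := by
  obtain ⟨a, t, rfl⟩ := exists_cons_of_ne_nil ht
  simpa using append_left_lt (l₁ := u) (nil_lt_cons a t)

theorem isPrefix_or_append_lt_append_of_lt (h : u < v) :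
    u <+: v ∨ ∀ s t : List α, u ++ s < v ++ t := by
  induction h with
  | nil => exact .inl nil_prefix
  | rel hab => exact .inr fun _ _ => Lex.rel hab
  | cons _ ih =>
    rcases ih with ⟨r, rfl⟩ | h
    · exact .inl ⟨r, rfl⟩
    · exact .inr fun s t => Lex.cons (h s t)

theorem append_lt_append_of_lt_of_length_le (h : u < v) (hl : v.length ≤ u.length)
    (s t : List α) : u ++ s < v ++ t := by
  refine (isPrefix_or_append_lt_append_of_lt h).resolve_left (fun hp => ?_) s t
  exact lt_irrefl u (by rwa [hp.eq_of_length (le_antisymm hp.length_le hl)] at h ⊢)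

theorem lt_of_append_lt_append_left {w : List α} (h : w ++ u < w ++ v) : u < v := by
  by_contra! hvu
  rcases hvu.lt_or_eq with hvu | rfl
  · exact lt_asymm h (append_left_lt hvu)
  · exact lt_irrefl _ h

-- Core's `IsPrefix.le` is about core's `≤` on lists, not the one of Mathlib's `LinearOrder`.
theorem IsPrefix.le' (h : u <+: v) : u ≤ v := by
  obtain ⟨t, rfl⟩ := h
  rcases eq_or_ne t [] with rfl | ht
  · simp
  · exact (lt_append_of_ne_nil u ht).le

end List

section

open List

variable {α : Type*} [LinearOrder α] {u v w : List α}

theorem IsLyndon.ne_nil (hw : IsLyndon w) : w ≠ [] := hw.1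

theorem isLyndon_of_lt_suffix (hw : w ≠ [])
    (h : ∀ u v : List α, u ≠ [] → v ≠ [] → w = u ++ v → w < v) : IsLyndon w :=
  ⟨hw, fun u v hu hv huv => Lex.append_right _ u (h u v hu hv huv)⟩

theorem IsLyndon.lt_suffix (hw : IsLyndon (u ++ v)) (hu : u ≠ []) (hv : v ≠ []) :
    u ++ v < v := by
  have hrot : u ++ v < v ++ u := hw.2 u v hu hv rfl
  by_contra! hle
  have hvw : v < u ++ v := lt_of_le_of_ne hle fun h => hu (by simpa using congrArg length h)
  rcases isPrefix_or_append_lt_append_of_lt hvw with ⟨r, hr⟩ | h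
  · -- `u ++ v = v ++ r`: rotating at `v` instead of `u` contradicts `r < u`
    have hlen : r.length = u.length := by have := congrArg length hr; simp at this; omega
    have hr0 : r ≠ [] := by rintro rfl; exact hu (length_eq_zero_iff.mp hlen.symm)
    have hru : r < u := lt_of_append_lt_append_left (w := v) (hr ▸ hrot)
    exact lt_asymm (hw.2 v r hv hr0 hr.symm)
      (append_lt_append_of_lt_of_length_le hru hlen.ge v v)
  · exact lt_asymm hrot (by simpa using h u [])

theorem IsLyndon.append_lt_of_lt (hv : IsLyndon v) (hu : u ≠ []) (h : u < v) : u ++ v < v := by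
  rcases isPrefix_or_append_lt_append_of_lt h with ⟨r, rfl⟩ | h
  · have hr : r ≠ [] := by rintro rfl; simp at h
    exact append_left_lt (hv.lt_suffix hu hr)
  · simpa using h v []

theorem isLyndon_singleton (a : α) : IsLyndon [a] :=
  isLyndon_of_lt_suffix (cons_ne_nil a []) fun u v hu hv huv => by
    have := congrArg length huv
    have := length_pos_iff.mpr hu
    have := length_pos_iff.mpr hv
    simp only [length_singleton, length_append] at *
    omega

theorem IsLyndon.append (hu : IsLyndon u) (hv : IsLyndon v) (h : u < v) : IsLyndon (u ++ v) := by
  refine isLyndon_of_lt_suffix (by simp [hu.ne_nil]) fun p q hp hq hpq => ?_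
  have huv : u ++ v < v := hv.append_lt_of_lt hu.ne_nil h
  rcases append_eq_append_iff.mp hpq with ⟨r, rfl, rfl⟩ | ⟨r, rfl, rfl⟩
  · rcases eq_or_ne r [] with rfl | hr
    · simpa using huv
    · exact huv.trans (hv.lt_suffix hr hq)
  · rcases eq_or_ne r [] with rfl | hr
    · simpa using huv
    · exact append_lt_append_of_lt_of_length_le (hu.lt_suffix hp hr) (by simp) v v

theorem IsLyndon.not_isPrefix_flatten {x y : List α} (hxy : IsLyndon (x ++ y))
    (hx : x ≠ []) (hy : y ≠ []) {F : List (List α)} (hF : ∀ l ∈ F, l ≤ x ++ y) :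
    ¬ y <+: F.flatten := by
  induction F generalizing x y with
  | nil => simpa using hy
  | cons M F ih =>
    intro hyF
    rw [flatten_cons] at hyF
    rcases le_total y.length M.length with hl | hl
    · have hyM : y <+: M := prefix_of_prefix_length_le hyF (prefix_append M _) hl
      exact lt_irrefl y ((hyM.le'.trans (hF M mem_cons_self)).trans_lt (hxy.lt_suffix hx hy))
    · obtain ⟨y', rfl⟩ := prefix_of_prefix_length_le (prefix_append M _) hyF hl
      have hy' : y' ≠ [] := by
        rintro rfl
        exact lt_irrefl _ ((hxy.lt_suffix hx hy).trans_le (by simpa using hF M mem_cons_self))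
      rw [← append_assoc] at hxy hF
      exact ih hxy (by simp [hx]) hy' (fun l hl => hF l (mem_cons_of_mem M hl))
        ((prefix_append_right_inj M).mp hyF)

theorem IsLyndon.length_le_of_isPrefix {L P : List α} {F : List (List α)} (hL : L ≠ [])
    (hF : ∀ l ∈ F, l ≤ L) (hP : IsLyndon P) (hPF : P <+: L ++ F.flatten) :
    P.length ≤ L.length := by
  by_contra! hl
  obtain ⟨y, rfl⟩ := prefix_of_prefix_length_le (prefix_append L _) hPF hl.le
  have hy : y ≠ [] := by rintro rfl; simp at hl
  exact hP.not_isPrefix_flatten hL hy (fun l hl => (hF l hl).trans (prefix_append L y).le')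
    ((prefix_append_right_inj L).mp hPF)

def IsLyndonFactorization (F : List (List α)) : Prop :=
  (∀ l ∈ F, IsLyndon l) ∧ F.IsChain (· ≥ ·)

theorem IsLyndonFactorization.nil : IsLyndonFactorization ([] : List (List α)) :=
  ⟨by simp, isChain_nil⟩

theorem IsLyndonFactorization.tail {L : List α} {F : List (List α)}
    (h : IsLyndonFactorization (L :: F)) : IsLyndonFactorization F :=
  ⟨fun l hl => h.1 l (mem_cons_of_mem L hl), h.2.tail⟩

theorem IsLyndonFactorization.le_head {L : List α} {F : List (List α)}
    (h : IsLyndonFactorization (L :: F)) : ∀ l ∈ F, l ≤ L :=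
  (pairwise_cons.mp (isChain_iff_pairwise.mp h.2)).1

theorem IsLyndonFactorization.exists_cons_flatten {F : List (List α)}
    (hF : IsLyndonFactorization F) {u : List α} (hu : IsLyndon u) :
    ∃ G, IsLyndonFactorization G ∧ G.flatten = u ++ F.flatten := by
  induction F generalizing u with
  | nil => exact ⟨[u], ⟨by simpa using hu, isChain_singleton u⟩, by simp⟩
  | cons L F ih =>
    rcases le_or_gt L u with hLu | huL
    · refine ⟨u :: L :: F, ⟨?_, hF.2.cons_cons hLu⟩, by simp⟩
      simpa [hu] using hF.1
    · obtain ⟨G, hG, hGF⟩ := ih hF.tail (hu.append (hF.1 L mem_cons_self) huL)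
      exact ⟨G, hG, by simp [hGF]⟩

theorem exists_isLyndonFactorization (W : List α) :
    ∃ F, IsLyndonFactorization F ∧ F.flatten = W := by
  induction W with
  | nil => exact ⟨[], .nil, rfl⟩
  | cons a W ih =>
    obtain ⟨F, hF, rfl⟩ := ih
    exact hF.exists_cons_flatten (isLyndon_singleton a)

theorem IsLyndonFactorization.eq_nil_of_flatten_eq_nil {F : List (List α)}
    (hF : IsLyndonFactorization F) (h : F.flatten = []) : F = [] :=
  eq_nil_iff_forall_not_mem.mpr fun l hl => (hF.1 l hl).ne_nil (flatten_eq_nil_iff.mp h l hl)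

theorem IsLyndonFactorization.eq_of_flatten_eq {F G : List (List α)}
    (hF : IsLyndonFactorization F) (hG : IsLyndonFactorization G)
    (h : F.flatten = G.flatten) : F = G := by
  induction F generalizing G with
  | nil => exact (hG.eq_nil_of_flatten_eq_nil h.symm).symm
  | cons L F ih =>
    rcases G with _ | ⟨M, G⟩
    · exact absurd (hF.eq_nil_of_flatten_eq_nil h) (cons_ne_nil L F)
    have hLM : L.length ≤ M.length := by
      refine (hF.1 L mem_cons_self).length_le_of_isPrefix (hG.1 M mem_cons_self).ne_nil
        hG.le_head ?_
      rw [← flatten_cons, ← h]; exact prefix_append L _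
    have hML : M.length ≤ L.length := by
      refine (hG.1 M mem_cons_self).length_le_of_isPrefix (hF.1 L mem_cons_self).ne_nil
        hF.le_head ?_
      rw [← flatten_cons, h]; exact prefix_append M _
    obtain ⟨rfl, hFG⟩ := append_inj h (le_antisymm hLM hML)
    rw [ih hF.tail hG.tail hFG]

end

theorem lyndon_factorization_exists_unique_general {α : Type*} [LinearOrder α]
    (W : List α) :
    ∃! F : List (List α),
      F.flatten = W ∧ (∀ l ∈ F, IsLyndon l) ∧ F.Chain' (· ≥ ·) := by
  obtain ⟨F, hF, rfl⟩ := exists_isLyndonFactorization W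
  exact ⟨F, ⟨rfl, hF⟩, fun G ⟨hGF, hG⟩ => IsLyndonFactorization.eq_of_flatten_eq hG hF hGF⟩

/-- Every nonempty word has a unique factorization into a non-increasing
sequence of Lyndon words. -/
theorem lyndon_factorization_exists_unique {α : Type*} [LinearOrder α]
    (W : List α) (hW : W ≠ []) :
    ∃! F : List (List α),
      F.flatten = W ∧ (∀ l ∈ F, IsLyndon l) ∧ F.Chain' (· ≥ ·) :=
  lyndon_factorization_exists_unique_general W
end

section
/- Let W = L_1 ... L_k be the Lyndon factorization of W and 1 ≤ l < k. Then the sorted list of all (global) suffixes of W whose starting positions lie in the prefix L_1...L_l, and the sorted list of those starting in L_{l+1}...L_k, can be merged (as sorted lists under lexicographic order of the corresponding global suffixes) to obtain the full sorted list of suffixes of W; equivalently, sorting positions in L_1...L_l by local suffix order and positions in L_{l+1}...L_k by local suffix order and merging by global suffix order yields the global suffix order on all positions. -/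
namespace List

theorem injOn_drop {α : Type*} (l : List α) : Set.InjOn (l.drop ·) (Set.Iic l.length) := by
  intro i hi j hj h
  have := congrArg length h
  simp only [length_drop] at this
  simp only [Set.mem_Iic] at hi hj
  omega

section LexOrder

variable {α : Type*} [LinearOrder α]

/-- `x` and `y` first differ at a position where `x` has the smaller letter, so that `x` stays
below `y` whatever is appended to either. -/
def LtAtMismatch (x y : List α) : Prop :=
  ∃ (p : List α) (c d : α) (r s : List α), c < d ∧ x = p ++ c :: r ∧ y = p ++ d :: s

theorem LtAtMismatch.append_lt {x y : List α} (h : LtAtMismatch x y) (s t : List α) :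
    x ++ s < y ++ t := by
  obtain ⟨p, c, d, r, q, hcd, rfl, rfl⟩ := h
  simpa using List.append_left_lt (l₁ := p) (List.Lex.rel hcd : c :: (r ++ s) < d :: (q ++ t))

theorem LtAtMismatch.cons {x y : List α} (a : α) (h : LtAtMismatch x y) :
    LtAtMismatch (a :: x) (a :: y) := by
  obtain ⟨p, c, d, r, s, hcd, rfl, rfl⟩ := h
  exact ⟨a :: p, c, d, r, s, hcd, rfl, rfl⟩

theorem ltAtMismatch_or_exists_eq_append_of_lt {x y : List α} (h : x < y) :
    LtAtMismatch x y ∨ ∃ z ≠ [], y = x ++ z := by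
  induction h with
  | nil => exact Or.inr ⟨_, cons_ne_nil _ _, rfl⟩
  | cons _ ih =>
    rcases ih with h | ⟨z, hz, rfl⟩
    · exact Or.inl (h.cons _)
    · exact Or.inr ⟨z, hz, rfl⟩
  | rel hab => exact Or.inl ⟨[], _, _, _, _, hab, rfl, rfl⟩

theorem ltAtMismatch_of_lt_of_length_eq {x y : List α} (h : x < y) (hlen : x.length = y.length) :
    LtAtMismatch x y := by
  rcases ltAtMismatch_or_exists_eq_append_of_lt h with h | ⟨z, hz, rfl⟩
  · exact h
  · simp_all

theorem lt_of_append_lt_append_left_s5 {c a b : List α} (h : c ++ a < c ++ b) : a < b :=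
  (StrictMono.lt_iff_lt fun _ _ => List.append_left_lt (l₁ := c)).1 h

theorem drop_append_le_drop_append {u v : List α} (hv : ∀ k < u.length, v < u.drop k ++ v)
    {i j : ℕ} (h : u.drop i ≤ u.drop j) : u.drop i ++ v ≤ u.drop j ++ v := by
  rcases h.eq_or_lt with h | h
  · rw [h]
  rcases ltAtMismatch_or_exists_eq_append_of_lt h with h | ⟨z, hz, hzj⟩
  · exact (h.append_lt v v).le
  have hsuf : z <:+ u := (suffix_append _ _).trans (hzj ▸ drop_suffix j u)
  have hk : u.length - z.length < u.length := by
    have := hsuf.length_le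
    have := length_pos_iff.2 hz
    omega
  rw [hzj, append_assoc]
  exact (List.append_left_lt (suffix_iff_eq_drop.1 hsuf ▸ hv _ hk)).le

end LexOrder

section SortByKey

variable {ι β : Type*} [LinearOrder β]

theorem pairwise_mergeSort_of_le_imp (g : ι → β) {R : ι → ι → Prop} {l : List ι}
    (h : ∀ i ∈ l, ∀ j ∈ l, g i ≤ g j → R i j) :
    (l.mergeSort fun i j => decide (g i ≤ g j)).Pairwise R :=
  (pairwise_mergeSort (fun _ _ _ => by simpa using le_trans)
    (fun _ _ => by simpa using le_total _ _) l).imp_of_mem fun hi hj hij =>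
      h _ (mem_mergeSort.1 hi) _ (mem_mergeSort.1 hj) (by simpa using hij)

theorem pairwise_merge_of_key {f : ι → β} {l₁ l₂ : List ι} (h₁ : l₁.Pairwise (f · ≤ f ·))
    (h₂ : l₂.Pairwise (f · ≤ f ·)) :
    (l₁.merge l₂ fun i j => decide (f i ≤ f j)).Pairwise (f · ≤ f ·) := by
  simpa using pairwise_merge (le := fun i j => decide (f i ≤ f j))
    (fun _ _ _ => by simpa using le_trans) (fun _ _ => by simpa using le_total _ _) l₁ l₂
    (by simpa using h₁) (by simpa using h₂)

theorem mergeSort_eq_of_perm_of_pairwise {f : ι → β} {l l' : List ι}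
    (hf : Set.InjOn f {i | i ∈ l}) (hperm : l' ~ l) (hl' : l'.Pairwise (f · ≤ f ·)) :
    l.mergeSort (fun i j => decide (f i ≤ f j)) = l' := by
  refine (mergeSort_perm l _).trans hperm.symm |>.eq_of_pairwise
    (fun i j hi hj hij hji => hf (mem_mergeSort.1 hi) (hperm.subset hj) (le_antisymm hij hji))
    (pairwise_mergeSort_of_le_imp f fun _ _ _ _ => id) hl'

end SortByKey

end List

open List

section LyndonChain

variable {α : Type*} [LinearOrder α]

/-- A proper suffix of a Lyndon word exceeds it at a mismatch: otherwise it would be a border,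
and Lyndon words are unbordered. -/
theorem IsLyndon.ltAtMismatch_suffix {p t : List α} (hL : IsLyndon (p ++ t)) (hp : p ≠ [])
    (ht : t ≠ []) : LtAtMismatch (p ++ t) t := by
  have hrot : p ++ t < t ++ p := hL.2 p t hp ht rfl
  rcases lt_trichotomy (p ++ t) t with hlt | heq | hgt
  · rcases ltAtMismatch_or_exists_eq_append_of_lt hlt with h | ⟨z, -, hz⟩
    · exact h
    · have := congrArg length hz
      simp only [length_append] at this
      exact absurd (length_eq_zero_iff.1 (by omega)) hp
  · simpa [hp] using congrArg length heq
  · rcases ltAtMismatch_or_exists_eq_append_of_lt hgt with h | ⟨q, hq, hborder⟩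
    · exact absurd (h.append_lt p []) (by simpa using hrot.not_gt)
    · have hqp : q < p := lt_of_append_lt_append_left_s5 (c := t) (hborder ▸ hrot)
      have hlen : q.length = p.length := by
        have := congrArg length hborder
        simp only [length_append] at this
        omega
      have hrot' : p ++ t < q ++ t := hL.2 t q ht hq hborder
      exact absurd (((ltAtMismatch_of_lt_of_length_eq hqp hlen).append_lt t t).trans hrot')
        (lt_irrefl _)

theorem flatten_lt_append_of_pairwise_ge {L : List α} {C : List (List α)}
    (hLy : ∀ l ∈ L :: C, IsLyndon l) (hC : (L :: C).Pairwise (· ≥ ·)) {X : List α}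
    (hX : C.flatten ≤ X) : C.flatten < L ++ X := by
  induction C generalizing L X with
  | nil =>
    obtain ⟨a, L', rfl⟩ := exists_cons_of_ne_nil (hLy L mem_cons_self).1
    simp
  | cons m C ih =>
    have hLyL : ∀ l ∈ L :: C, IsLyndon l := fun l hl => hLy l (by grind)
    have hLym : ∀ l ∈ m :: C, IsLyndon l := fun l hl => hLy l (mem_cons_of_mem _ hl)
    have hCL : (L :: C).Pairwise (· ≥ ·) := hC.sublist (.cons_cons _ (sublist_cons_self _ _))
    have hCm : (m :: C).Pairwise (· ≥ ·) := hC.of_cons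
    have hmL : m ≤ L := rel_of_pairwise_cons hC mem_cons_self
    rw [flatten_cons] at hX ⊢
    rcases hmL.eq_or_lt with rfl | hlt
    · exact List.append_left_lt ((ih hLym hCm le_rfl).trans_le hX)
    rcases ltAtMismatch_or_exists_eq_append_of_lt hlt with h | ⟨L₂, hL₂, rfl⟩
    · exact h.append_lt _ _
    · have hLyLm : IsLyndon (m ++ L₂) := hLy _ mem_cons_self
      rw [append_assoc]
      exact List.append_left_lt ((ih hLyL hCL le_rfl).trans
        ((hLyLm.ltAtMismatch_suffix (hLym m mem_cons_self).1 hL₂).append_lt _ _))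

theorem flatten_lt_drop_flatten_append {A C : List (List α)} (hLy : ∀ l ∈ A ++ C, IsLyndon l)
    (hAC : (A ++ C).Pairwise (· ≥ ·)) {i : ℕ} (hi : i < A.flatten.length) :
    C.flatten < A.flatten.drop i ++ C.flatten := by
  induction A generalizing i with
  | nil => simp at hi
  | cons L A ih =>
    have hLyA : ∀ l ∈ A ++ C, IsLyndon l := fun l hl => hLy l (mem_cons_of_mem _ hl)
    have hACt : (A ++ C).Pairwise (· ≥ ·) := hAC.of_cons
    rw [flatten_cons, drop_append]
    rw [flatten_cons, length_append] at hi
    by_cases hiL : L.length ≤ i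
    · rw [drop_eq_nil_of_le hiL, nil_append]
      exact ih hLyA hACt (by omega)
    have hX : C.flatten ≤ A.flatten ++ C.flatten := by
      rcases eq_or_ne A.flatten [] with hA | hA
      · simp [hA]
      · simpa using (ih hLyA hACt (i := 0) (length_pos_iff.2 hA)).le
    have hLC : ∀ l ∈ L :: C, IsLyndon l := fun l hl => hLy l (by grind)
    have hpair : (L :: C).Pairwise (· ≥ ·) :=
      hAC.sublist (.cons_cons _ (sublist_append_right A C))
    have hlt := flatten_lt_append_of_pairwise_ge hLC hpair hX
    rw [Nat.sub_eq_zero_of_le (by omega), drop_zero, append_assoc]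
    rcases Nat.eq_zero_or_pos i with rfl | hi0
    · simpa using hlt
    · have hL : IsLyndon (L.take i ++ L.drop i) := by simpa using hLy L mem_cons_self
      have htake : L.take i ≠ [] := by simpa [hi0.ne'] using ne_nil_of_length_pos (by omega)
      have hdrop : L.drop i ≠ [] := by simp; omega
      have hmis := (hL.ltAtMismatch_suffix htake hdrop).append_lt (A.flatten ++ C.flatten)
        (A.flatten ++ C.flatten)
      rw [take_append_drop] at hmis
      exact hlt.trans hmis

end LyndonChain

theorem merge_sorted_suffixes_general {α : Type*} [LinearOrder α]
    (A B : List (List α))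
    (hLy : ∀ l ∈ A ++ B, IsLyndon l)
    (hchain : (A ++ B).Chain' (· ≥ ·)) :
    ((List.range (A ++ B).flatten.length).mergeSort
        (fun i j => decide ((A ++ B).flatten.drop i ≤ (A ++ B).flatten.drop j))) =
      List.merge
        ((List.range A.flatten.length).mergeSort
          (fun i j => decide (A.flatten.drop i ≤ A.flatten.drop j)))
        ((List.range' A.flatten.length B.flatten.length).mergeSort
          (fun i j => decide (B.flatten.drop (i - A.flatten.length) ≤
            B.flatten.drop (j - A.flatten.length))))
        (fun i j => decide ((A ++ B).flatten.drop i ≤ (A ++ B).flatten.drop j)) := by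
  have hpair : (A ++ B).Pairwise (· ≥ ·) := isChain_iff_pairwise.1 hchain
  have hW : (A ++ B).flatten = A.flatten ++ B.flatten := flatten_append
  have hlocal : ∀ i ∈ range A.flatten.length, ∀ j ∈ range A.flatten.length,
      A.flatten.drop i ≤ A.flatten.drop j →
        (A ++ B).flatten.drop i ≤ (A ++ B).flatten.drop j := by
    intro i hi j hj h
    rw [mem_range] at hi hj
    rw [hW, drop_append_of_le_length hi.le, drop_append_of_le_length hj.le]
    exact drop_append_le_drop_append (fun k hk => flatten_lt_drop_flatten_append hLy hpair hk) h
  have hshift : ∀ i ∈ range' A.flatten.length B.flatten.length,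
      (A ++ B).flatten.drop i = B.flatten.drop (i - A.flatten.length) := by
    intro i hi
    rw [hW, drop_append, drop_eq_nil_of_le (mem_range'_1.1 hi).1, nil_append]
  refine mergeSort_eq_of_perm_of_pairwise ((injOn_drop _).mono fun i hi => ?_) ?_
    (pairwise_merge_of_key (pairwise_mergeSort_of_le_imp _ hlocal)
      (pairwise_mergeSort_of_le_imp _ fun i hi j hj h => by rwa [hshift i hi, hshift j hj]))
  · exact (mem_range.1 hi).le
  · refine (merge_perm_append _).trans
      (((mergeSort_perm _ _).append (mergeSort_perm _ _)).trans ?_)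
    rw [hW, length_append, range_add]
    simp [range'_eq_map_range]

/-- Merging the sorted suffixes of the two parts of a Lyndon factorization:
sorting the positions of the first block by local-suffix order, the positions
of the second block by local-suffix order, and merging the two sorted lists by
global-suffix order yields the positions of `W` sorted by global-suffix
order. -/
theorem merge_sorted_suffixes {α : Type*} [LinearOrder α]
    (A B : List (List α)) (hA : A ≠ []) (hB : B ≠ [])
    (hLy : ∀ l ∈ A ++ B, IsLyndon l)
    (hchain : (A ++ B).Chain' (· ≥ ·)) :
    ((List.range (A ++ B).flatten.length).mergeSort
        (fun i j => decide ((A ++ B).flatten.drop i ≤ (A ++ B).flatten.drop j))) =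
      List.merge
        ((List.range A.flatten.length).mergeSort
          (fun i j => decide (A.flatten.drop i ≤ A.flatten.drop j)))
        ((List.range' A.flatten.length B.flatten.length).mergeSort
          (fun i j => decide (B.flatten.drop (i - A.flatten.length) ≤
            B.flatten.drop (j - A.flatten.length))))
        (fun i j => decide ((A ++ B).flatten.drop i ≤ (A ++ B).flatten.drop j)) :=
  merge_sorted_suffixes_general A B hLy hchain
end

section
/- Let W = L_1 ... L_k be the Lyndon factorization of W, and fix an index m with 1 ≤ m ≤ k. Then the global suffix of W starting at the beginning of L_m equals L_m L_{m+1} ... L_k, and for any position i strictly inside L_m, the global suffix starting at i is strictly greater than L_m L_{m+1} ... L_k. -/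
/-! A Lyndon word `L` is smaller than each proper suffix `v`, and since `v` is shorter, `L` and `v`
already differ at some position inside `v`; so the comparison survives any continuation, and
`L ++ X < v ++ Y` for all `X`, `Y`. With `X = Y = L_{m+1} ⋯ L_k` this is the theorem. -/

namespace List

variable {α : Type*} [LinearOrder α]

theorem lt_of_append_lt_append_left_s13 {p s t : List α} (h : p ++ s < p ++ t) : s < t :=
  Classical.byContradiction fun hst => append_left_le (List.not_lt.mp hst) h

theorem append_lt_append_of_lt_of_length_le_s13 {s t : List α} (h : s < t)
    (hlen : t.length ≤ s.length) (x y : List α) : s ++ x < t ++ y := by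
  induction h with
  | nil => simp at hlen
  | rel hab => exact Lex.rel hab
  | cons _ ih => exact Lex.cons (ih (by simpa using hlen))

theorem lt_of_lt_append_of_not_prefix {w v x : List α} (h : w < v ++ x) (hv : ¬ v <+: w) :
    w < v := by
  induction v generalizing w with
  | nil => exact absurd nil_prefix hv
  | cons b v ih =>
    cases h with
    | nil => exact Lex.nil
    | rel hab => exact Lex.rel hab
    | cons h => exact Lex.cons (ih h fun hpre => hv (cons_prefix_cons.mpr ⟨rfl, hpre⟩))

end List

section Lyndon

variable {α : Type*} [LinearOrder α] {w u v : List α}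

/-- If `w = v ++ t` then the rotation `t ++ v` would be both above `w` (Lyndon) and below it,
because `v ++ t = w < v ++ u` forces `t < u` with `t`, `u` of equal length. -/
theorem IsLyndon.not_prefix_of_eq_append (hw : IsLyndon w) (hu : u ≠ []) (hv : v ≠ [])
    (huv : w = u ++ v) : ¬ v <+: w := by
  rintro ⟨t, hvt⟩
  have hlen : t.length = u.length := by
    have := congrArg List.length hvt
    simp only [huv, List.length_append] at this
    omega
  have ht : t ≠ [] := by
    rintro rfl
    exact hu (List.eq_nil_of_length_eq_zero hlen.symm)
  have htu : t < u := List.lt_of_append_lt_append_left_s13 (p := v) (by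
    rw [hvt]; exact hw.2 u v hu hv huv)
  have hrot_lt : t ++ v < w :=
    huv ▸ List.append_lt_append_of_lt_of_length_le_s13 htu hlen.ge v v
  exact List.lt_irrefl w (List.lt_trans (hw.2 v t hv ht hvt.symm) hrot_lt)

theorem IsLyndon.lt_of_eq_append (hw : IsLyndon w) (hu : u ≠ []) (hv : v ≠ [])
    (huv : w = u ++ v) : w < v :=
  List.lt_of_lt_append_of_not_prefix (hw.2 u v hu hv huv) (hw.not_prefix_of_eq_append hu hv huv)

theorem IsLyndon.append_lt_drop_append (hw : IsLyndon w) {j : ℕ} (hj0 : 0 < j)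
    (hjw : j < w.length) (x y : List α) : w ++ x < w.drop j ++ y := by
  have hlt : w < w.drop j :=
    hw.lt_of_eq_append (List.ne_nil_of_length_pos (by rw [List.length_take]; omega))
      (List.ne_nil_of_length_pos (by rw [List.length_drop]; omega))
      (List.take_append_drop j w).symm
  exact List.append_lt_append_of_lt_of_length_le_s13 hlt (by simp) x y

end Lyndon

theorem suffix_at_lyndon_factor_general {α : Type*} [LinearOrder α]
    (A B : List (List α)) (L : List α)
    (hLy : ∀ l ∈ A ++ L :: B, IsLyndon l) :
    (A ++ L :: B).flatten.drop A.flatten.length = L ++ B.flatten ∧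
      ∀ i, A.flatten.length < i → i < A.flatten.length + L.length →
        L ++ B.flatten < (A ++ L :: B).flatten.drop i := by
  have hflat : (A ++ L :: B).flatten = A.flatten ++ (L ++ B.flatten) := by simp
  refine ⟨by rw [hflat, List.drop_left], fun i hi hiL => ?_⟩
  obtain ⟨j, rfl⟩ : ∃ j, i = A.flatten.length + j := ⟨i - A.flatten.length, by omega⟩
  rw [hflat, List.drop_length_add_append, List.drop_append_of_le_length (by omega)]
  exact (hLy L (by simp)).append_lt_drop_append (by omega) (by omega) _ _

/-- In the Lyndon factorization `W = L_1 ⋯ L_k` (with `F = A ++ L :: B`,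
`L = L_m`), the global suffix starting at the beginning of `L_m` is
`L_m L_{m+1} ⋯ L_k`, and the global suffix starting at any position
strictly inside `L_m` is strictly greater than `L_m L_{m+1} ⋯ L_k`. -/
theorem suffix_at_lyndon_factor {α : Type*} [LinearOrder α]
    (A B : List (List α)) (L : List α)
    (hLy : ∀ l ∈ A ++ L :: B, IsLyndon l)
    (hchain : (A ++ L :: B).Chain' (· ≥ ·)) :
    (A ++ L :: B).flatten.drop A.flatten.length = L ++ B.flatten ∧
      ∀ i, A.flatten.length < i → i < A.flatten.length + L.length →
        L ++ B.flatten < (A ++ L :: B).flatten.drop i :=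
  suffix_at_lyndon_factor_general A B L hLy
end
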